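/- Let N be a positive integer and suppose there exists a real ρ > 0 such that for every integer M ≥ 1 one has ℓ(M) − ρ·log M ≥ ℓ(N) − ρ·log N. Then N is a value of Landau's function, i.e., there exists n with N = g(n). -/

import Mathlib

/-!
Put `n = ℓ(N)`. A permutation whose cycles have the lengths `p^k ∥ N` lives in `S_n` and has
order `N`, so `N ≤ g(n)`. Conversely, the order `M` of any `σ ∈ S_n` is the lcm of its cycle
lengths; since `ℓ` is subadditive on lcms and `ℓ(c) ≤ c`, we get `ℓ(M) ≤ n = ℓ(N)`, and the
superiority inequality then forces `ρ log M ≤ ρ log N`, i.e. `M ≤ N`. Hence `g(n) = N`.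
-/

/-- Landau's function: the maximal order of an element of the symmetric group `S_n`. -/
noncomputable def landau (n : ℕ) : ℕ :=
  Finset.univ.sup fun σ : Equiv.Perm (Fin n) => orderOf σ

/-- The additive function `ℓ` with `ℓ(1) = 0` and `ℓ(p^k) = p^k` for primes `p` and `k ≥ 1`. -/
def ell (M : ℕ) : ℕ := ∑ p ∈ M.primeFactors, p ^ M.factorization p

open Finset

theorem Finset.sum_le_prod_of_two_le {ι : Type*} {s : Finset ι} {f : ι → ℕ}
    (hf : ∀ i ∈ s, 2 ≤ f i) : ∑ i ∈ s, f i ≤ ∏ i ∈ s, f i := by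
  classical
  induction s using Finset.induction with
  | empty => simp
  | @insert a s ha ih =>
    rw [sum_insert ha, prod_insert ha]
    have hfa : 2 ≤ f a := hf a (mem_insert_self a s)
    have hfs : ∀ i ∈ s, 2 ≤ f i := fun i hi => hf i (mem_insert_of_mem hi)
    rcases s.eq_empty_or_nonempty with rfl | ⟨b, hb⟩
    · simp
    · have hprod : 2 ≤ ∏ i ∈ s, f i :=
        (hfs b hb).trans (single_le_prod' (fun i hi => one_le_two.trans (hfs i hi)) hb)
      nlinarith [ih hfs]

theorem two_le_ordProj_of_mem_primeFactors {n p : ℕ} (hp : p ∈ n.primeFactors) :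
    2 ≤ p ^ n.factorization p :=
  (Nat.prime_of_mem_primeFactors hp).two_le.trans <|
    Nat.le_self_pow (Finsupp.mem_support_iff.mp (n.support_factorization ▸ hp)) p

theorem ell_le_self {n : ℕ} (hn : n ≠ 0) : ell n ≤ n :=
  calc ell n ≤ ∏ p ∈ n.primeFactors, p ^ n.factorization p :=
        sum_le_prod_of_two_le fun _ => two_le_ordProj_of_mem_primeFactors
    _ = n := by rw [← n.support_factorization]; exact Nat.prod_factorization_pow_eq_self hn

theorem ell_mul_of_coprime {a b : ℕ} (hab : a.Coprime b) : ell (a * b) = ell a + ell b := by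
  have hdisj := hab.disjoint_primeFactors
  rw [ell, hab.primeFactors_mul, sum_union hdisj, Nat.factorization_mul_of_coprime hab]
  congr 1 <;> refine sum_congr rfl fun p hp => ?_
  · simp [Finsupp.notMem_support_iff.mp (b.support_factorization ▸ disjoint_left.mp hdisj hp)]
  · simp [Finsupp.notMem_support_iff.mp (a.support_factorization ▸ disjoint_right.mp hdisj hp)]

theorem ell_le_of_dvd {d n : ℕ} (hdn : d ∣ n) (hn : n ≠ 0) : ell d ≤ ell n := by
  have hd : d ≠ 0 := ne_zero_of_dvd_ne_zero hn hdn
  calc ell d ≤ ∑ p ∈ d.primeFactors, p ^ n.factorization p :=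
        sum_le_sum fun p hp => Nat.pow_le_pow_right (Nat.prime_of_mem_primeFactors hp).pos
          ((Nat.factorization_le_iff_dvd hd hn).2 hdn p)
    _ ≤ ell n := sum_le_sum_of_subset (Nat.primeFactors_mono hdn hn)

theorem ell_lcm_le {a b : ℕ} (ha : a ≠ 0) (hb : b ≠ 0) : ell (a.lcm b) ≤ ell a + ell b := by
  rw [← Nat.factorizationLCMLeft_mul_factorizationLCMRight ha hb,
    ell_mul_of_coprime (Nat.coprime_factorizationLCMLeft_factorizationLCMRight a b)]
  exact add_le_add (ell_le_of_dvd (Nat.factorizationLCMLeft_dvd_left a b) ha)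
    (ell_le_of_dvd (Nat.factorizationLCMRight_dvd_right a b) hb)

theorem ell_multiset_lcm_le_sum {m : Multiset ℕ} (hm : 0 ∉ m) : ell m.lcm ≤ m.sum := by
  induction m using Multiset.induction with
  | empty => simp [ell]
  | cons a m ih =>
    rw [Multiset.mem_cons, not_or] at hm
    have hlcm : m.lcm ≠ 0 := mt (Multiset.lcm_eq_zero_iff m).mp hm.2
    rw [Multiset.lcm_cons, Multiset.sum_cons]
    calc ell (lcm a m.lcm) ≤ ell a + ell m.lcm := ell_lcm_le (Ne.symm hm.1) hlcm
      _ ≤ a + m.sum := add_le_add (ell_le_self (Ne.symm hm.1)) (ih hm.2)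

section Perm

variable {α : Type*} [Fintype α] [DecidableEq α]

theorem ell_orderOf_le_card (σ : Equiv.Perm α) : ell (orderOf σ) ≤ Fintype.card α := by
  rw [← Equiv.Perm.lcm_cycleType]
  calc ell σ.cycleType.lcm ≤ σ.cycleType.sum :=
        ell_multiset_lcm_le_sum fun h0 => by
          have := Equiv.Perm.two_le_of_mem_cycleType h0; omega
    _ = #σ.support := σ.sum_cycleType
    _ ≤ Fintype.card α := card_le_univ _

theorem exists_perm_orderOf_eq {N : ℕ} (hN : N ≠ 0) (hcard : ell N ≤ Fintype.card α) :
    ∃ σ : Equiv.Perm α, orderOf σ = N := by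
  set m : Multiset ℕ := N.primeFactors.val.map fun p => p ^ N.factorization p
  have hm : ∀ c ∈ m, 2 ≤ c := fun c hc => by
    obtain ⟨p, hp, rfl⟩ := Multiset.mem_map.mp hc
    exact two_le_ordProj_of_mem_primeFactors hp
  obtain ⟨σ, hσ⟩ := (Equiv.Perm.exists_with_cycleType_iff α (m := m)).mpr ⟨hcard, hm⟩
  have hcoprime : Set.Pairwise N.primeFactors
      (Nat.Coprime.onFun fun p => p ^ N.factorization p) := fun p hp q hq hpq =>
    Nat.coprime_pow_primes _ _ (Nat.prime_of_mem_primeFactors hp)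
      (Nat.prime_of_mem_primeFactors hq) hpq
  refine ⟨σ, ?_⟩
  rw [← Equiv.Perm.lcm_cycleType, hσ]
  change N.primeFactors.lcm _ = N
  rw [Finset.lcm_eq_prod hcoprime, ← N.support_factorization]
  exact Nat.prod_factorization_pow_eq_self hN

end Perm

theorem orderOf_le_landau {n : ℕ} (σ : Equiv.Perm (Fin n)) : orderOf σ ≤ landau n :=
  le_sup (f := fun τ : Equiv.Perm (Fin n) => orderOf τ) (mem_univ σ)

theorem landau_le {n K : ℕ} (h : ∀ σ : Equiv.Perm (Fin n), orderOf σ ≤ K) : landau n ≤ K :=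
  Finset.sup_le fun σ _ => h σ

theorem landau_ell_eq {N : ℕ} (hN : N ≠ 0) (hmax : ∀ M, 0 < M → ell M ≤ ell N → M ≤ N) :
    landau (ell N) = N := by
  refine le_antisymm (landau_le fun σ => hmax _ (orderOf_pos σ) ?_) ?_
  · simpa using ell_orderOf_le_card σ
  · obtain ⟨σ, hσ⟩ := exists_perm_orderOf_eq (α := Fin (ell N)) hN (by simp)
    exact hσ.symm.trans_le (orderOf_le_landau σ)

/-- If `N ≥ 1` and there is `ρ > 0` with
`ℓ(M) - ρ log M ≥ ℓ(N) - ρ log N` for all integers `M ≥ 1`, then `N` is a value of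
Landau's function. -/
theorem mem_range_landau_of_superior (N : ℕ) (hN : 1 ≤ N) (ρ : ℝ) (hρ : 0 < ρ)
    (h : ∀ M : ℕ, 1 ≤ M →
      (ell N : ℝ) - ρ * Real.log N ≤ (ell M : ℝ) - ρ * Real.log M) :
    ∃ n : ℕ, N = landau n := by
  refine ⟨ell N, (landau_ell_eq (by omega) fun M hM hell => ?_).symm⟩
  have hell' : (ell M : ℝ) ≤ ell N := by exact_mod_cast hell
  have hlog : Real.log M ≤ Real.log N :=
    le_of_mul_le_mul_left (by linarith [h M hM]) hρ
  exact_mod_cast (Real.log_le_log_iff (by positivity) (by positivity)).mp hlog
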